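/- arXiv:2406.19322 — 2 statements merged into one kernel-verified Lean document; each statement's English description precedes it below -/
import Mathlib

section
/- Let j : ℝ³ × ℝ → ℝ³ be j(x,t) = (ȧ(t), 0, 0)·cos(2πn₁x₁) for an integer n₁ ≥ 1 and a differentiable a : ℝ → ℝ. If ρ solves ∂_t ρ = −div j with ∫_{[0,1]³} ρ(x,0) dx = 0, then: (i) the macroscopic current J(t) = ∫_{[0,1]³} j(x,t) dx = 0 for all t, so the transport change of polarization Δp_T := ∫_{t_i}^{t_f} J dt = 0; and (ii) the classical change Δp_cl := ∫_{t_i}^{t_f} ∫_{[0,1]³} x·∂_t ρ(x,t) dx dt = −(a(t_f) − a(t_i))·(1,0,0). Hence Δp_T ≠ Δp_cl whenever a(t_f) ≠ a(t_i). -/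
open MeasureTheory Real intervalIntegral

section AuxPolar

lemma auxPolar_pi_prod {α : Type*} [MeasurableSpace α] (μ : Measure α) [SigmaFinite μ]
    {ι : Type*} [Fintype ι] (f : ι → α → ℝ) :
    ∫ x : ι → α, ∏ i, f i (x i) ∂(Measure.pi fun _ => μ) = ∏ i, ∫ y, f i y ∂μ := by
  letI : MeasureSpace α := ⟨μ⟩
  exact MeasureTheory.integral_fintype_prod_eq_prod f

lemma auxPolar_restrict_cube :
    (volume : Measure (Fin 3 → ℝ)).restrict (Set.univ.pi fun _ => Set.Icc (0:ℝ) 1)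
      = Measure.pi (fun _ => (volume : Measure ℝ).restrict (Set.Icc (0:ℝ) 1)) := by
  refine (Measure.pi_eq fun s hs => ?_).symm
  rw [Measure.restrict_apply (MeasurableSet.univ_pi hs), ← Set.pi_inter_distrib,
    volume_pi_pi]
  exact Finset.prod_congr rfl fun i _ => (Measure.restrict_apply (hs i)).symm

lemma auxPolar_pi3 (f : Fin 3 → ℝ → ℝ) :
    ∫ x : Fin 3 → ℝ in Set.univ.pi (fun _ => Set.Icc (0:ℝ) 1), ∏ i, f i (x i)
      = ∏ i, ∫ y in Set.Icc (0:ℝ) 1, f i y := by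
  rw [auxPolar_restrict_cube, auxPolar_pi_prod]

lemma auxPolar_pi3' (f : Fin 3 → ℝ → ℝ) :
    ∫ x : EuclideanSpace ℝ (Fin 3) in ((WithLp.ofLp : EuclideanSpace ℝ (Fin 3) → (Fin 3 → ℝ)) ⁻¹' Set.univ.pi (fun _ => Set.Icc (0:ℝ) 1)), ∏ i, f i (x i)
      = ∏ i, ∫ y in Set.Icc (0:ℝ) 1, f i y :=
  ((PiLp.volume_preserving_ofLp (Fin 3)).setIntegral_preimage_emb
    (MeasurableEquiv.toLp 2 (Fin 3 → ℝ)).symm.measurableEmbedding _ _).trans (auxPolar_pi3 f)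

variable {n₁ : ℕ}

lemma auxPolar_c_pos (hn₁ : 1 ≤ n₁) : (0:ℝ) < 2 * π * n₁ := by
  have : (0:ℝ) < (n₁:ℝ) := by exact_mod_cast Nat.lt_of_lt_of_le Nat.zero_lt_one hn₁
  positivity

lemma auxPolar_sin_c : Real.sin (2 * π * n₁) = 0 := by
  have : (2 : ℝ) * π * n₁ = n₁ * (2 * π) := by ring
  rw [this]
  have h := Real.sin_add_nat_mul_two_pi 0 n₁
  simpa using h

lemma auxPolar_cos_c : Real.cos (2 * π * n₁) = 1 := by
  have : (2 : ℝ) * π * n₁ = n₁ * (2 * π) := by ring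
  rw [this]
  exact Real.cos_nat_mul_two_pi n₁

lemma auxPolar_icc_cos (hn₁ : 1 ≤ n₁) :
    ∫ y in Set.Icc (0:ℝ) 1, Real.cos (2 * π * n₁ * y) = 0 := by
  set c : ℝ := 2 * π * n₁ with hc
  have hc0 : c ≠ 0 := (auxPolar_c_pos hn₁).ne'
  rw [MeasureTheory.integral_Icc_eq_integral_Ioc,
    ← intervalIntegral.integral_of_le (zero_le_one), intervalIntegral.integral_comp_mul_left _ hc0]
  simp [auxPolar_sin_c, hc]

lemma auxPolar_icc_sin (hn₁ : 1 ≤ n₁) :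
    ∫ y in Set.Icc (0:ℝ) 1, Real.sin (2 * π * n₁ * y) = 0 := by
  set c : ℝ := 2 * π * n₁ with hc
  have hc0 : c ≠ 0 := (auxPolar_c_pos hn₁).ne'
  rw [MeasureTheory.integral_Icc_eq_integral_Ioc,
    ← intervalIntegral.integral_of_le (zero_le_one), intervalIntegral.integral_comp_mul_left _ hc0]
  simp [auxPolar_cos_c, hc]

lemma auxPolar_icc_id_sin (hn₁ : 1 ≤ n₁) :
    ∫ y in Set.Icc (0:ℝ) 1, Real.sin (2 * π * n₁ * y) * y = -(1 / (2 * π * n₁)) := by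
  set c : ℝ := 2 * π * n₁ with hc
  have hc0 : c ≠ 0 := (auxPolar_c_pos hn₁).ne'
  have key : ∀ y : ℝ, HasDerivAt
      (fun y : ℝ => (1/c^2) * Real.sin (c*y) - (1/c) * (y * Real.cos (c*y)))
      (Real.sin (c*y) * y) y := by
    intro y
    have hlin : HasDerivAt (fun y : ℝ => c * y) c y := by
      simpa using (hasDerivAt_id y).const_mul c
    have hs : HasDerivAt (fun y : ℝ => Real.sin (c*y)) (Real.cos (c*y) * c) y :=
      (Real.hasDerivAt_sin (c*y)).comp y hlin
    have hco : HasDerivAt (fun y : ℝ => Real.cos (c*y)) (-Real.sin (c*y) * c) y :=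
      (Real.hasDerivAt_cos (c*y)).comp y hlin
    have hyc : HasDerivAt (fun y : ℝ => y * Real.cos (c*y))
        (1 * Real.cos (c*y) + y * (-Real.sin (c*y) * c)) y :=
      (hasDerivAt_id y).mul hco
    have := ((hs.const_mul (1/c^2)).sub (hyc.const_mul (1/c)))
    refine this.congr_deriv ?_
    have hci : c * c⁻¹ = 1 := mul_inv_cancel₀ hc0
    linear_combination (c⁻¹ * Real.cos (c*y) + y * Real.sin (c*y)) * hci
  have h1 : Real.sin (c*1) = 0 := by rw [mul_one, hc]; exact auxPolar_sin_c
  have h2 : Real.cos (c*1) = 1 := by rw [mul_one, hc]; exact auxPolar_cos_c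
  rw [MeasureTheory.integral_Icc_eq_integral_Ioc,
    ← intervalIntegral.integral_of_le (zero_le_one)]
  rw [intervalIntegral.integral_eq_sub_of_hasDerivAt (fun y _ => key y) ?_]
  · simp [hc, auxPolar_sin_c, auxPolar_cos_c]
  · apply Continuous.intervalIntegrable
    continuity

lemma auxPolar_cube_cos (hn₁ : 1 ≤ n₁) :
    ∫ x : EuclideanSpace ℝ (Fin 3) in ((WithLp.ofLp : EuclideanSpace ℝ (Fin 3) → (Fin 3 → ℝ)) ⁻¹' Set.univ.pi (fun _ => Set.Icc (0:ℝ) 1)),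
      Real.cos (2 * π * n₁ * x 0) = 0 := by
  have h : (fun x : EuclideanSpace ℝ (Fin 3) => Real.cos (2 * π * n₁ * x 0))
      = fun x => ∏ i, (![fun y => Real.cos (2 * π * n₁ * y), fun _ => 1, fun _ => 1] i) (x i) := by
    funext x; simp [Fin.prod_univ_three, Matrix.vecHead, Matrix.vecTail]
  rw [h, auxPolar_pi3']
  simp [Fin.prod_univ_three, auxPolar_icc_cos hn₁, Matrix.vecHead, Matrix.vecTail]

lemma auxPolar_cube_sin_x (hn₁ : 1 ≤ n₁) (j : Fin 3) :
    ∫ x : EuclideanSpace ℝ (Fin 3) in ((WithLp.ofLp : EuclideanSpace ℝ (Fin 3) → (Fin 3 → ℝ)) ⁻¹' Set.univ.pi (fun _ => Set.Icc (0:ℝ) 1)),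
      Real.sin (2 * π * n₁ * x 0) * x j
      = if j = 0 then -(1 / (2 * π * n₁)) else 0 := by
  fin_cases j
  · show (∫ x : EuclideanSpace ℝ (Fin 3) in ((WithLp.ofLp : EuclideanSpace ℝ (Fin 3) → (Fin 3 → ℝ)) ⁻¹' Set.univ.pi (fun _ => Set.Icc (0:ℝ) 1)),
        Real.sin (2 * π * n₁ * x 0) * x 0)
        = if (0 : Fin 3) = 0 then -(1 / (2 * π * n₁)) else 0
    rw [if_pos rfl]
    have h : (fun x : EuclideanSpace ℝ (Fin 3) => Real.sin (2 * π * n₁ * x 0) * x 0)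
        = fun x => ∏ i,
            (![fun y => Real.sin (2 * π * n₁ * y) * y, fun _ => 1, fun _ => 1] i) (x i) := by
      funext x; simp [Fin.prod_univ_three, Matrix.vecHead, Matrix.vecTail]
    rw [h, auxPolar_pi3']
    simp [Fin.prod_univ_three, auxPolar_icc_id_sin hn₁, Matrix.vecHead, Matrix.vecTail]
  · show (∫ x : EuclideanSpace ℝ (Fin 3) in ((WithLp.ofLp : EuclideanSpace ℝ (Fin 3) → (Fin 3 → ℝ)) ⁻¹' Set.univ.pi (fun _ => Set.Icc (0:ℝ) 1)),
        Real.sin (2 * π * n₁ * x 0) * x 1)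
        = if (1 : Fin 3) = 0 then -(1 / (2 * π * n₁)) else 0
    rw [if_neg (by decide)]
    have h : (fun x : EuclideanSpace ℝ (Fin 3) => Real.sin (2 * π * n₁ * x 0) * x 1)
        = fun x => ∏ i,
            (![fun y => Real.sin (2 * π * n₁ * y), fun y => y, fun _ => 1] i) (x i) := by
      funext x; simp [Fin.prod_univ_three, Matrix.vecHead, Matrix.vecTail]
    rw [h, auxPolar_pi3']
    simp [Fin.prod_univ_three, auxPolar_icc_sin hn₁, Matrix.vecHead, Matrix.vecTail]
  · show (∫ x : EuclideanSpace ℝ (Fin 3) in ((WithLp.ofLp : EuclideanSpace ℝ (Fin 3) → (Fin 3 → ℝ)) ⁻¹' Set.univ.pi (fun _ => Set.Icc (0:ℝ) 1)),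
        Real.sin (2 * π * n₁ * x 0) * x 2)
        = if (2 : Fin 3) = 0 then -(1 / (2 * π * n₁)) else 0
    rw [if_neg (by decide)]
    have h : (fun x : EuclideanSpace ℝ (Fin 3) => Real.sin (2 * π * n₁ * x 0) * x 2)
        = fun x => ∏ i,
            (![fun y => Real.sin (2 * π * n₁ * y), fun _ => 1, fun y => y] i) (x i) := by
      funext x; simp [Fin.prod_univ_three, Matrix.vecHead, Matrix.vecTail]
    rw [h, auxPolar_pi3']
    simp [Fin.prod_univ_three, auxPolar_icc_sin hn₁, Matrix.vecHead, Matrix.vecTail]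

lemma auxPolar_cube_sin_smul (hn₁ : 1 ≤ n₁) :
    ∫ x : EuclideanSpace ℝ (Fin 3) in ((WithLp.ofLp : EuclideanSpace ℝ (Fin 3) → (Fin 3 → ℝ)) ⁻¹' Set.univ.pi (fun _ => Set.Icc (0:ℝ) 1)),
      Real.sin (2 * π * n₁ * x 0) • x
      = (-(1 / (2 * π * n₁))) • (EuclideanSpace.single 0 1 : EuclideanSpace ℝ (Fin 3)) := by
  have hcompact : IsCompact (((WithLp.ofLp : EuclideanSpace ℝ (Fin 3) → (Fin 3 → ℝ)) ⁻¹'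
      Set.univ.pi (fun _ : Fin 3 => Set.Icc (0:ℝ) 1))) :=
    (PiLp.homeomorph 2 (fun _ : Fin 3 => ℝ)).isCompact_preimage.mpr
      (isCompact_univ_pi fun _ => isCompact_Icc)
  have hcontf : Continuous (fun x : EuclideanSpace ℝ (Fin 3) =>
      Real.sin (2 * π * n₁ * x 0) • x) :=
    (Real.continuous_sin.comp (continuous_const.mul ((continuous_apply 0).comp (PiLp.continuous_ofLp 2 _)))).smul continuous_id
  have hInt : IntegrableOn (fun x : EuclideanSpace ℝ (Fin 3) =>
      Real.sin (2 * π * n₁ * x 0) • x)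
      (((WithLp.ofLp : EuclideanSpace ℝ (Fin 3) → (Fin 3 → ℝ)) ⁻¹' Set.univ.pi (fun _ => Set.Icc (0:ℝ) 1))) volume :=
    hcontf.continuousOn.integrableOn_compact hcompact
  refine PiLp.ext fun j => ?_
  have hproj := ((EuclideanSpace.proj j : EuclideanSpace ℝ (Fin 3) →L[ℝ] ℝ).integral_comp_comm
    hInt).symm
  simp only [PiLp.proj_apply, _root_.map_smul, smul_eq_mul] at hproj
  calc (∫ x : EuclideanSpace ℝ (Fin 3) in ((WithLp.ofLp : EuclideanSpace ℝ (Fin 3) → (Fin 3 → ℝ)) ⁻¹' Set.univ.pi (fun _ => Set.Icc (0:ℝ) 1)),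
        Real.sin (2 * π * n₁ * x 0) • x) j
      = ∫ x : EuclideanSpace ℝ (Fin 3) in ((WithLp.ofLp : EuclideanSpace ℝ (Fin 3) → (Fin 3 → ℝ)) ⁻¹' Set.univ.pi (fun _ => Set.Icc (0:ℝ) 1)),
          Real.sin (2 * π * n₁ * x 0) * x j := hproj
    _ = if j = 0 then -(1 / (2 * π * n₁)) else 0 := auxPolar_cube_sin_x hn₁ j
    _ = ((-(1 / (2 * π * n₁))) • (EuclideanSpace.single 0 1 : EuclideanSpace ℝ (Fin 3))) j := by
        rcases eq_or_ne j 0 with h | h <;>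
          simp [h, EuclideanSpace.single_apply, eq_comm]

lemma auxPolar_fderiv (k cc : ℝ) (x : EuclideanSpace ℝ (Fin 3)) :
    (∑ i : Fin 3, fderiv ℝ
        (fun y : EuclideanSpace ℝ (Fin 3) =>
          (k * Real.cos (cc * y 0)) • (EuclideanSpace.single 0 1 : EuclideanSpace ℝ (Fin 3)))
        x (EuclideanSpace.single i 1) i)
      = -(k * Real.sin (cc * x 0) * cc) := by
  have h0 : HasFDerivAt (fun y : EuclideanSpace ℝ (Fin 3) => (y 0 : ℝ))
      (EuclideanSpace.proj (0 : Fin 3) : EuclideanSpace ℝ (Fin 3) →L[ℝ] ℝ) x := by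
    have h := (EuclideanSpace.proj (0 : Fin 3) :
        EuclideanSpace ℝ (Fin 3) →L[ℝ] ℝ).hasFDerivAt (x := x)
    exact h
  have h1 : HasFDerivAt (fun y : EuclideanSpace ℝ (Fin 3) => cc * y 0)
      (cc • (EuclideanSpace.proj (0 : Fin 3) : EuclideanSpace ℝ (Fin 3) →L[ℝ] ℝ)) x :=
    h0.const_mul cc
  have h2 : HasFDerivAt (fun y : EuclideanSpace ℝ (Fin 3) => Real.cos (cc * y 0))
      ((-Real.sin (cc * x 0)) •
        (cc • (EuclideanSpace.proj (0 : Fin 3) : EuclideanSpace ℝ (Fin 3) →L[ℝ] ℝ))) x :=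
    h1.cos
  have h3 : HasFDerivAt (fun y : EuclideanSpace ℝ (Fin 3) => k * Real.cos (cc * y 0))
      (k • ((-Real.sin (cc * x 0)) •
        (cc • (EuclideanSpace.proj (0 : Fin 3) : EuclideanSpace ℝ (Fin 3) →L[ℝ] ℝ)))) x :=
    h2.const_mul k
  have h4 := h3.smul_const (EuclideanSpace.single 0 1 : EuclideanSpace ℝ (Fin 3))
  rw [h4.fderiv]
  simp [Fin.sum_univ_three, EuclideanSpace.single_apply, PiLp.proj_apply,
    ContinuousLinearMap.smulRight_apply]
  ring

end AuxPolar

/-- Counterexample: for the current `j(x,t) = (ȧ(t),0,0)·cos(2πn₁x₁)` on the unit cell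
`[0,1]³`, with `ρ` solving the continuity equation `∂_t ρ = −div j` and charge neutral
at `t = 0`, the transport change of polarization vanishes while the classical change
equals `−(a(t_f) − a(t_i))·e₁`; hence they differ whenever `a(t_f) ≠ a(t_i)`. -/
theorem transport_vs_classical_counterexample
    (n₁ : ℕ) (hn₁ : 1 ≤ n₁) (a : ℝ → ℝ) (ha : Differentiable ℝ a)
    (ρ : EuclideanSpace ℝ (Fin 3) → ℝ → ℝ)
    (hρreg : ContDiff ℝ 1 (fun p : EuclideanSpace ℝ (Fin 3) × ℝ => ρ p.1 p.2))
    (hcont : ∀ (x : EuclideanSpace ℝ (Fin 3)) (t : ℝ),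
      deriv (fun s => ρ x s) t =
        -(∑ i : Fin 3, fderiv ℝ
            (fun y : EuclideanSpace ℝ (Fin 3) =>
              (deriv a t * Real.cos (2 * Real.pi * n₁ * y 0)) •
                (EuclideanSpace.single 0 1 : EuclideanSpace ℝ (Fin 3)))
            x (EuclideanSpace.single i 1) i))
    (hneutral : (∫ x : EuclideanSpace ℝ (Fin 3) in
        ((WithLp.ofLp : EuclideanSpace ℝ (Fin 3) → (Fin 3 → ℝ)) ⁻¹'
          Set.univ.pi (fun _ => Set.Icc (0:ℝ) 1)), ρ x 0) = 0)
    (ti tf : ℝ) :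
    (∀ t : ℝ, (∫ x : EuclideanSpace ℝ (Fin 3) in
        ((WithLp.ofLp : EuclideanSpace ℝ (Fin 3) → (Fin 3 → ℝ)) ⁻¹'
          Set.univ.pi (fun _ => Set.Icc (0:ℝ) 1)),
          (deriv a t * Real.cos (2 * Real.pi * n₁ * x 0)) •
            (EuclideanSpace.single 0 1 : EuclideanSpace ℝ (Fin 3)))
        = 0) ∧
    ((∫ t in ti..tf, ∫ x : EuclideanSpace ℝ (Fin 3) in
        ((WithLp.ofLp : EuclideanSpace ℝ (Fin 3) → (Fin 3 → ℝ)) ⁻¹'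
          Set.univ.pi (fun _ => Set.Icc (0:ℝ) 1)),
          (deriv a t * Real.cos (2 * Real.pi * n₁ * x 0)) •
            (EuclideanSpace.single 0 1 : EuclideanSpace ℝ (Fin 3)))
        = 0) ∧
    ((∫ t in ti..tf, ∫ x : EuclideanSpace ℝ (Fin 3) in
        ((WithLp.ofLp : EuclideanSpace ℝ (Fin 3) → (Fin 3 → ℝ)) ⁻¹'
          Set.univ.pi (fun _ => Set.Icc (0:ℝ) 1)),
          (deriv (fun s => ρ x s) t) • x)
        = (-(a tf - a ti)) •
            (EuclideanSpace.single 0 1 : EuclideanSpace ℝ (Fin 3))) ∧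
    (a tf ≠ a ti →
      (0 : EuclideanSpace ℝ (Fin 3)) ≠
        ∫ t in ti..tf, ∫ x : EuclideanSpace ℝ (Fin 3) in
          ((WithLp.ofLp : EuclideanSpace ℝ (Fin 3) → (Fin 3 → ℝ)) ⁻¹'
          Set.univ.pi (fun _ => Set.Icc (0:ℝ) 1)),
            (deriv (fun s => ρ x s) t) • x) := by
  have hccpos : (0:ℝ) < 2 * π * n₁ := auxPolar_c_pos hn₁
  have hcc0 : (2 * π * (n₁:ℝ)) ≠ 0 := hccpos.ne'
  have hn0 : ((n₁:ℝ)) ≠ 0 := by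
    exact_mod_cast Nat.one_le_iff_ne_zero.mp hn₁
  -- part (i)
  have part1 : ∀ t : ℝ, (∫ x : EuclideanSpace ℝ (Fin 3) in
      ((WithLp.ofLp : EuclideanSpace ℝ (Fin 3) → (Fin 3 → ℝ)) ⁻¹' Set.univ.pi (fun _ => Set.Icc (0:ℝ) 1)),
        (deriv a t * Real.cos (2 * Real.pi * n₁ * x 0)) •
          (EuclideanSpace.single 0 1 : EuclideanSpace ℝ (Fin 3))) = 0 := by
    intro t
    calc (∫ x : EuclideanSpace ℝ (Fin 3) in ((WithLp.ofLp : EuclideanSpace ℝ (Fin 3) → (Fin 3 → ℝ)) ⁻¹' Set.univ.pi (fun _ => Set.Icc (0:ℝ) 1)),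
          (deriv a t * Real.cos (2 * Real.pi * n₁ * x 0)) •
            (EuclideanSpace.single 0 1 : EuclideanSpace ℝ (Fin 3)))
        = (∫ x : EuclideanSpace ℝ (Fin 3) in ((WithLp.ofLp : EuclideanSpace ℝ (Fin 3) → (Fin 3 → ℝ)) ⁻¹' Set.univ.pi (fun _ => Set.Icc (0:ℝ) 1)),
            deriv a t * Real.cos (2 * Real.pi * n₁ * x 0)) •
            (EuclideanSpace.single 0 1 : EuclideanSpace ℝ (Fin 3)) := integral_smul_const _ _
      _ = (deriv a t * ∫ x : EuclideanSpace ℝ (Fin 3) in ((WithLp.ofLp : EuclideanSpace ℝ (Fin 3) → (Fin 3 → ℝ)) ⁻¹' Set.univ.pi (fun _ => Set.Icc (0:ℝ) 1)),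
            Real.cos (2 * Real.pi * n₁ * x 0)) •
            (EuclideanSpace.single 0 1 : EuclideanSpace ℝ (Fin 3)) := by
          congr 1
          exact MeasureTheory.integral_const_mul _ _
      _ = 0 := by rw [auxPolar_cube_cos hn₁, mul_zero, zero_smul]
  refine ⟨part1, ?_, ?_, ?_⟩
  · simp only [part1, intervalIntegral.integral_zero]
  all_goals {
  -- pointwise form of the continuity equation
  have h1 : ∀ (x : EuclideanSpace ℝ (Fin 3)) (t : ℝ),
      deriv (fun s => ρ x s) t
        = deriv a t * (2 * π * n₁) * Real.sin (2 * π * n₁ * x 0) := by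
    intro x t
    rw [hcont x t, auxPolar_fderiv]
    ring
  -- continuity of `deriv a`
  have hda : Continuous (deriv a) := by
    set F := fun p : EuclideanSpace ℝ (Fin 3) × ℝ => ρ p.1 p.2 with hF
    have hFd : Differentiable ℝ F := hρreg.differentiable one_ne_zero
    have hder : ∀ (x : EuclideanSpace ℝ (Fin 3)) (t : ℝ),
        deriv (fun s => ρ x s) t
          = fderiv ℝ F (x, t) ((0 : EuclideanSpace ℝ (Fin 3)), (1:ℝ)) := by
      intro x t
      have hx : HasDerivAt (fun s : ℝ => ((x, s) : EuclideanSpace ℝ (Fin 3) × ℝ))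
          ((0 : EuclideanSpace ℝ (Fin 3)), (1:ℝ)) t :=
        (hasDerivAt_const t x).prodMk (hasDerivAt_id t)
      exact ((hFd (x, t)).hasFDerivAt.comp_hasDerivAt t hx).deriv
    set x₀ : EuclideanSpace ℝ (Fin 3) :=
      EuclideanSpace.single 0 ((1:ℝ)/(4*n₁)) with hx₀
    have hx₀0 : (x₀ 0 : ℝ) = 1/(4*n₁) := by
      simp [hx₀, EuclideanSpace.single_apply]
    have hsin : Real.sin (2 * π * n₁ * x₀ 0) = 1 := by
      rw [hx₀0, show (2:ℝ) * π * n₁ * (1/(4*n₁)) = π/2 by field_simp; ring]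
      exact Real.sin_pi_div_two
    have hform : deriv a = fun t =>
        fderiv ℝ F (x₀, t) ((0 : EuclideanSpace ℝ (Fin 3)), (1:ℝ)) / (2 * π * n₁) := by
      funext t
      have := (h1 x₀ t).symm.trans (hder x₀ t)
      rw [hsin, mul_one] at this
      field_simp [this]
      linarith
    rw [hform]
    have hc1 : Continuous fun t : ℝ =>
        fderiv ℝ F (x₀, t) ((0 : EuclideanSpace ℝ (Fin 3)), (1:ℝ)) := by
      have hcf : Continuous fun p : EuclideanSpace ℝ (Fin 3) × ℝ => fderiv ℝ F p :=
        hρreg.continuous_fderiv one_ne_zero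
      exact ((hcf.comp (continuous_const.prodMk continuous_id)).clm_apply continuous_const)
    exact hc1.div_const _
  -- inner spatial integral
  have inner : ∀ t : ℝ, (∫ x : EuclideanSpace ℝ (Fin 3) in
      ((WithLp.ofLp : EuclideanSpace ℝ (Fin 3) → (Fin 3 → ℝ)) ⁻¹' Set.univ.pi (fun _ => Set.Icc (0:ℝ) 1)), (deriv (fun s => ρ x s) t) • x)
      = (-(deriv a t)) • (EuclideanSpace.single 0 1 : EuclideanSpace ℝ (Fin 3)) := by
    intro t
    have hfun : (fun x : EuclideanSpace ℝ (Fin 3) => (deriv (fun s => ρ x s) t) • x)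
        = fun x => (deriv a t * (2 * π * n₁)) • (Real.sin (2 * π * n₁ * x 0) • x) := by
      funext x
      rw [h1 x t, smul_smul]
    rw [hfun]
    calc (∫ x : EuclideanSpace ℝ (Fin 3) in ((WithLp.ofLp : EuclideanSpace ℝ (Fin 3) → (Fin 3 → ℝ)) ⁻¹' Set.univ.pi (fun _ => Set.Icc (0:ℝ) 1)),
          (deriv a t * (2 * π * n₁)) • (Real.sin (2 * π * n₁ * x 0) • x))
        = (deriv a t * (2 * π * n₁)) •
            ∫ x : EuclideanSpace ℝ (Fin 3) in ((WithLp.ofLp : EuclideanSpace ℝ (Fin 3) → (Fin 3 → ℝ)) ⁻¹' Set.univ.pi (fun _ => Set.Icc (0:ℝ) 1)),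
              Real.sin (2 * π * n₁ * x 0) • x := MeasureTheory.integral_smul _ _
      _ = (deriv a t * (2 * π * n₁)) • ((-(1 / (2 * π * n₁))) •
            (EuclideanSpace.single 0 1 : EuclideanSpace ℝ (Fin 3))) := by
          rw [auxPolar_cube_sin_smul hn₁]
      _ = (-(deriv a t)) • (EuclideanSpace.single 0 1 : EuclideanSpace ℝ (Fin 3)) := by
          rw [smul_smul]
          congr 1
          field_simp
  have part3 : (∫ t in ti..tf, ∫ x : EuclideanSpace ℝ (Fin 3) in
      ((WithLp.ofLp : EuclideanSpace ℝ (Fin 3) → (Fin 3 → ℝ)) ⁻¹' Set.univ.pi (fun _ => Set.Icc (0:ℝ) 1)), (deriv (fun s => ρ x s) t) • x)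
      = (-(a tf - a ti)) • (EuclideanSpace.single 0 1 : EuclideanSpace ℝ (Fin 3)) := by
    simp only [inner]
    calc (∫ t in ti..tf, (-(deriv a t)) •
            (EuclideanSpace.single 0 1 : EuclideanSpace ℝ (Fin 3)))
        = (∫ t in ti..tf, -(deriv a t)) •
            (EuclideanSpace.single 0 1 : EuclideanSpace ℝ (Fin 3)) :=
          intervalIntegral.integral_smul_const _ _
      _ = (-(a tf - a ti)) • (EuclideanSpace.single 0 1 : EuclideanSpace ℝ (Fin 3)) := by
          rw [intervalIntegral.integral_neg,
            intervalIntegral.integral_deriv_eq_sub (fun x _ => ha x)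
              (hda.intervalIntegrable ti tf)]
  first
  | exact part3
  | { intro hne h
      have h2 : (0 : EuclideanSpace ℝ (Fin 3))
          = (-(a tf - a ti)) • (EuclideanSpace.single 0 1 : EuclideanSpace ℝ (Fin 3)) :=
        h.trans part3
      have h3 := congrArg (fun v : EuclideanSpace ℝ (Fin 3) => v 0) h2
      simp [EuclideanSpace.single_apply] at h3
      exact hne (by linarith) }
  }
end

section
/- Let j : ℝ³ → ℝ³ be continuous and periodic with respect to the lattice generated by linearly independent vectors e₁, e₂, e₃, and let Ω_uc be the parallelepiped {ν¹e₁ + ν²e₂ + ν³e₃ : ν ∈ [0,1)³}. Then for any lattice point R, the surface moment integral (1/|Ω_uc|)∫_{R⊕∂Ω_uc} (x−R)·(j·n) dS equals Σ_{k=1}^{3} (e_k ⊗ e^k) ∫_{A_k} j dS, where e^k are the dual basis vectors (e_i·e^j = δ_i^j), A_k is the face of the cell with ν^k = 0, and the face integrals are taken in the parameters ν. -/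
/-!
On the face `ν^k = 1` the periodic current takes the same values as on the opposite face
`ν^k = 0`, while the moment arm `x - R` is shifted by `e_k`. Hence the two face contributions
to the moment differ exactly by `e_k` times the flux of `j` through the face `A_k`, and that
flux is the projection of the face-averaged current onto the area vector `e_{k+1} × e_{k+2}`.
-/

open Real intervalIntegral Function
open scoped Matrix

section IteratedIntegral

variable {E F : Type*} [NormedAddCommGroup E] [NormedSpace ℝ E]
  [NormedAddCommGroup F] [NormedSpace ℝ F] [CompleteSpace F] {a b c d : ℝ}

theorem intervalIntegral_intervalIntegral_add {f g : ℝ → ℝ → E}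
    (hf : Continuous (uncurry f)) (hg : Continuous (uncurry g)) :
    ∫ s in a..b, ∫ t in c..d, (f s t + g s t)
      = (∫ s in a..b, ∫ t in c..d, f s t) + ∫ s in a..b, ∫ t in c..d, g s t := by
  calc ∫ s in a..b, ∫ t in c..d, (f s t + g s t)
      = ∫ s in a..b, ((∫ t in c..d, f s t) + ∫ t in c..d, g s t) := by
        congr 1
        funext s
        exact integral_add ((hf.uncurry_left s).intervalIntegrable c d)
          ((hg.uncurry_left s).intervalIntegrable c d)
    _ = _ := integral_add
        ((continuous_parametric_intervalIntegral_of_continuous' hf c d).intervalIntegrable a b)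
        ((continuous_parametric_intervalIntegral_of_continuous' hg c d).intervalIntegrable a b)

theorem ContinuousLinearMap.intervalIntegral_intervalIntegral_comp_comm [CompleteSpace E]
    (L : E →L[ℝ] F) {f : ℝ → ℝ → E} (hf : Continuous (uncurry f)) :
    ∫ s in a..b, ∫ t in c..d, L (f s t) = L (∫ s in a..b, ∫ t in c..d, f s t) := by
  calc ∫ s in a..b, ∫ t in c..d, L (f s t)
      = ∫ s in a..b, L (∫ t in c..d, f s t) := by
        congr 1
        funext s
        exact L.intervalIntegral_comp_comm ((hf.uncurry_left s).intervalIntegrable c d)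
    _ = _ := L.intervalIntegral_comp_comm
        ((continuous_parametric_intervalIntegral_of_continuous' hf c d).intervalIntegrable a b)

theorem intervalIntegral_intervalIntegral_dotProduct_const {ι : Type*} [Fintype ι]
    {f : ℝ → ℝ → ι → ℝ} (hf : Continuous (uncurry f)) (v : ι → ℝ) :
    ∫ s in a..b, ∫ t in c..d, f s t ⬝ᵥ v
      = v ⬝ᵥ ∫ s in a..b, ∫ t in c..d, f s t := by
  simp_rw [dotProduct_comm _ v]
  exact ContinuousLinearMap.intervalIntegral_intervalIntegral_comp_comm
    (LinearMap.toContinuousLinearMap (dotProductBilin ℝ ℝ v)) hf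

theorem intervalIntegral_intervalIntegral_smul_translate_sub [CompleteSpace E]
    {φ : ℝ → ℝ → ℝ} (hφ : Continuous (uncurry φ)) (p u v : E) :
    (∫ s in a..b, ∫ t in c..d, φ s t • (p + s • u + t • v))
      - ∫ s in a..b, ∫ t in c..d, φ s t • (s • u + t • v)
      = (∫ s in a..b, ∫ t in c..d, φ s t) • p := by
  have hsplit : ∀ s t,
      φ s t • (p + s • u + t • v) = φ s t • p + φ s t • (s • u + t • v) :=
    fun s t => by rw [add_assoc, smul_add]
  simp only [hsplit]
  rw [intervalIntegral_intervalIntegral_add (hφ.smul continuous_const) (hφ.smul (by fun_prop)),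
    add_sub_cancel_right]
  simp only [intervalIntegral.integral_smul_const]

end IteratedIntegral

theorem surface_moment_integral_eq_dual_basis_projections_general
    (e : Fin 3 → Fin 3 → ℝ) (j : (Fin 3 → ℝ) → (Fin 3 → ℝ))
    (hj : Continuous j) (hper : ∀ (x : Fin 3 → ℝ) (i : Fin 3), j (x + e i) = j x)
    (R : Fin 3 → ℝ) :
    (e 0 ⬝ᵥ (e 1 ⨯₃ e 2))⁻¹ •
      (∑ k : Fin 3,
        ((∫ s in (0:ℝ)..1, ∫ t in (0:ℝ)..1,
            (j (R + e k + s • e (k + 1) + t • e (k + 2)) ⬝ᵥ (e (k + 1) ⨯₃ e (k + 2))) •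
              (e k + s • e (k + 1) + t • e (k + 2)))
          - ∫ s in (0:ℝ)..1, ∫ t in (0:ℝ)..1,
            (j (R + s • e (k + 1) + t • e (k + 2)) ⬝ᵥ (e (k + 1) ⨯₃ e (k + 2))) •
              (s • e (k + 1) + t • e (k + 2))))
    = ∑ k : Fin 3,
        ((((e 0 ⬝ᵥ (e 1 ⨯₃ e 2))⁻¹ • (e (k + 1) ⨯₃ e (k + 2))) ⬝ᵥ
            (∫ s in (0:ℝ)..1, ∫ t in (0:ℝ)..1,
              j (R + s • e (k + 1) + t • e (k + 2)))) • e k) := by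
  have hface : ∀ k : Fin 3,
      ((∫ s in (0:ℝ)..1, ∫ t in (0:ℝ)..1,
          (j (R + e k + s • e (k + 1) + t • e (k + 2)) ⬝ᵥ (e (k + 1) ⨯₃ e (k + 2))) •
            (e k + s • e (k + 1) + t • e (k + 2)))
        - ∫ s in (0:ℝ)..1, ∫ t in (0:ℝ)..1,
          (j (R + s • e (k + 1) + t • e (k + 2)) ⬝ᵥ (e (k + 1) ⨯₃ e (k + 2))) •
            (s • e (k + 1) + t • e (k + 2)))
      = ((e (k + 1) ⨯₃ e (k + 2)) ⬝ᵥ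
          ∫ s in (0:ℝ)..1, ∫ t in (0:ℝ)..1,
            j (R + s • e (k + 1) + t • e (k + 2))) • e k := by
    intro k
    have hshift : ∀ s t : ℝ, j (R + e k + s • e (k + 1) + t • e (k + 2))
        = j (R + s • e (k + 1) + t • e (k + 2)) := fun s t => by
      rw [← hper (R + s • e (k + 1) + t • e (k + 2)) k]
      congr 1
      abel
    have hcont : Continuous (uncurry fun s t : ℝ => j (R + s • e (k + 1) + t • e (k + 2))) :=
      hj.comp (by fun_prop)
    have hflux : Continuous (uncurry fun s t : ℝ =>
        j (R + s • e (k + 1) + t • e (k + 2)) ⬝ᵥ (e (k + 1) ⨯₃ e (k + 2))) :=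
      hcont.dotProduct continuous_const
    simp only [hshift]
    rw [intervalIntegral_intervalIntegral_smul_translate_sub hflux,
      intervalIntegral_intervalIntegral_dotProduct_const hcont]
  simp only [hface, Finset.smul_sum, smul_dotProduct, smul_smul, smul_eq_mul]

/-- For a lattice-periodic continuous current `j` and the fundamental parallelepiped
spanned by `e₁, e₂, e₃`, the cell-boundary moment integral
`(1/|Ω_uc|)∫_{R⊕∂Ω_uc}(x−R)(j·n) dS` (written parametrically, face by face, with
unnormalized area vectors `e_{k+1} × e_{k+2}`) equals
`Σ_k (e_k ⊗ e^k) ∫_{A_k} j dS`, where `e^k = (e_{k+1} × e_{k+2})/[e₁,e₂,e₃]` are the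
dual basis vectors and `A_k` is the face `ν^k = 0`. -/
theorem surface_moment_integral_eq_dual_basis_projections
    (e : Fin 3 → Fin 3 → ℝ) (j : (Fin 3 → ℝ) → (Fin 3 → ℝ))
    (hj : Continuous j) (hper : ∀ (x : Fin 3 → ℝ) (i : Fin 3), j (x + e i) = j x)
    (hV : 0 < e 0 ⬝ᵥ (e 1 ⨯₃ e 2)) (R : Fin 3 → ℝ) :
    (e 0 ⬝ᵥ (e 1 ⨯₃ e 2))⁻¹ •
      (∑ k : Fin 3,
        ((∫ s in (0:ℝ)..1, ∫ t in (0:ℝ)..1,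
            (j (R + e k + s • e (k + 1) + t • e (k + 2)) ⬝ᵥ (e (k + 1) ⨯₃ e (k + 2))) •
              (e k + s • e (k + 1) + t • e (k + 2)))
          - ∫ s in (0:ℝ)..1, ∫ t in (0:ℝ)..1,
            (j (R + s • e (k + 1) + t • e (k + 2)) ⬝ᵥ (e (k + 1) ⨯₃ e (k + 2))) •
              (s • e (k + 1) + t • e (k + 2))))
    = ∑ k : Fin 3,
        ((((e 0 ⬝ᵥ (e 1 ⨯₃ e 2))⁻¹ • (e (k + 1) ⨯₃ e (k + 2))) ⬝ᵥ
            (∫ s in (0:ℝ)..1, ∫ t in (0:ℝ)..1,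
              j (R + s • e (k + 1) + t • e (k + 2)))) • e k) :=
  surface_moment_integral_eq_dual_basis_projections_general e j hj hper R
end
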